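/- arXiv:2508.14805 — 3 statements merged into one kernel-verified Lean document; each statement's English description precedes it below -/
import Mathlib

section
/- Let f : [0,1] → GL_k(ℝ) be smooth (C¹), and let δ < 1/2. If |f(t)⁻¹ f'(t)| ≤ δ for all t ∈ [0,1] (in the Frobenius norm), then |f(0)⁻¹ f(1) − I_k| ≤ 2δ. -/
open Set

/-- Frobenius norm of a real matrix. -/
noncomputable def frob {k l : ℕ} (M : Matrix (Fin k) (Fin l) ℝ) : ℝ :=
  Real.sqrt (∑ i, ∑ j, (M i j) ^ 2)

/-!
Put `g t = f(0)⁻¹ f(t) - 1`. Then `g 0 = 0` and `g' = f(0)⁻¹ f' = g (f⁻¹ f') + f⁻¹ f'`, so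
submultiplicativity of the Frobenius norm gives `‖g'‖ ≤ δ ‖g‖ + δ`. Grönwall's inequality then
bounds `‖g 1‖` by `exp δ - 1`, which is at most `2 δ` for `0 ≤ δ ≤ 1/2`.
-/

open Real
open scoped Matrix.Norms.Frobenius

theorem frob_eq_norm {k l : ℕ} (M : Matrix (Fin k) (Fin l) ℝ) : frob M = ‖M‖ := by
  simp [frob, Matrix.frobenius_norm_def, sqrt_eq_rpow, norm_eq_abs]

theorem gronwallBound_zero_self (K x : ℝ) : gronwallBound 0 K K x = exp (K * x) - 1 := by
  rcases eq_or_ne K 0 with rfl | hK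
  · simp [gronwallBound_K0]
  · simp [gronwallBound_of_K_ne_0 hK, div_self hK]

theorem exp_sub_one_le_two_mul {x : ℝ} (h0 : 0 ≤ x) (h : x ≤ 1 / 2) : exp x - 1 ≤ 2 * x := by
  have hx : exp x * (1 - x) ≤ 1 := by
    have := exp_bound_div_one_sub_of_interval h0 (by linarith)
    rwa [le_div_iff₀ (by linarith)] at this
  nlinarith [exp_pos x]

section NormedRing

variable {R : Type*} [NormedRing R] [NormedAlgebra ℝ R] {F F' : ℝ → R} {δ a b : ℝ}

theorem norm_ringInverse_mul_sub_one_le (hF : ∀ t ∈ Icc a b, HasDerivAt F (F' t) t)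
    (hunit : ∀ t ∈ Icc a b, IsUnit (F t))
    (hbound : ∀ t ∈ Icc a b, ‖Ring.inverse (F t) * F' t‖ ≤ δ) :
    ∀ t ∈ Icc a b, ‖Ring.inverse (F a) * F t - 1‖ ≤ exp (δ * (t - a)) - 1 := by
  set g : ℝ → R := fun t ↦ Ring.inverse (F a) * F t - 1
  have hg : ∀ t ∈ Icc a b, HasDerivAt g (Ring.inverse (F a) * F' t) t := fun t ht ↦
    ((hF t ht).const_mul _).sub_const 1
  intro t ht
  have hab : a ∈ Icc a b := ⟨le_rfl, ht.1.trans ht.2⟩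
  rw [← gronwallBound_zero_self]
  refine norm_le_gronwallBound_of_norm_deriv_right_le
    (fun t ht ↦ (hg t ht).continuousAt.continuousWithinAt)
    (fun t ht ↦ (hg t (Ico_subset_Icc_self ht)).hasDerivWithinAt) ?_ (fun t ht ↦ ?_) t ht
  · simp [g, Ring.inverse_mul_cancel _ (hunit a hab)]
  · replace ht := Ico_subset_Icc_self ht
    have hsplit : Ring.inverse (F a) * F' t
        = g t * (Ring.inverse (F t) * F' t) + Ring.inverse (F t) * F' t := by
      simp only [g, sub_mul, one_mul, mul_assoc, ← mul_assoc (F t),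
        Ring.mul_inverse_cancel _ (hunit t ht), sub_add_cancel]
    calc ‖Ring.inverse (F a) * F' t‖
        ≤ ‖g t‖ * ‖Ring.inverse (F t) * F' t‖ + ‖Ring.inverse (F t) * F' t‖ := by
          rw [hsplit]; exact (norm_add_le _ _).trans (add_le_add_left (norm_mul_le _ _) _)
      _ ≤ δ * ‖g t‖ + δ := by nlinarith [hbound t ht, norm_nonneg (g t)]

end NormedRing

theorem matrix_derivative_control_general (k : ℕ) (δ : ℝ) (hδ : δ < 1 / 2)
    (f f' : ℝ → Matrix (Fin k) (Fin k) ℝ)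
    (hderiv : ∀ t ∈ Icc (0 : ℝ) 1, ∀ i j, HasDerivAt (fun s => f s i j) (f' t i j) t)
    (hinv : ∀ t ∈ Icc (0 : ℝ) 1, IsUnit (f t))
    (hbound : ∀ t ∈ Icc (0 : ℝ) 1, frob ((f t)⁻¹ * f' t) ≤ δ) :
    frob ((f 0)⁻¹ * f 1 - 1) ≤ 2 * δ := by
  have hδ₀ : 0 ≤ δ := (sqrt_nonneg _).trans (hbound 0 ⟨le_rfl, zero_le_one⟩)
  simp only [frob_eq_norm, Matrix.nonsing_inv_eq_ringInverse] at hbound ⊢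
  have hF : ∀ t ∈ Icc (0 : ℝ) 1, HasDerivAt f (f' t) t := fun t ht ↦
    hasDerivAt_pi.2 fun i ↦ hasDerivAt_pi.2 (hderiv t ht i)
  calc ‖Ring.inverse (f 0) * f 1 - 1‖
      ≤ exp (δ * (1 - 0)) - 1 :=
        norm_ringInverse_mul_sub_one_le hF hinv hbound 1 ⟨zero_le_one, le_rfl⟩
    _ ≤ 2 * δ := by simpa using exp_sub_one_le_two_mul hδ₀ hδ.le

/-- If `f : [0,1] → GL_k(ℝ)` is C¹ with `|f(t)⁻¹ f'(t)| ≤ δ < 1/2` on `[0,1]`,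
then `|f(0)⁻¹ f(1) − I| ≤ 2δ`. -/
theorem matrix_derivative_control (k : ℕ) (δ : ℝ) (hδ : δ < 1 / 2)
    (f f' : ℝ → Matrix (Fin k) (Fin k) ℝ)
    (hderiv : ∀ t ∈ Icc (0 : ℝ) 1, ∀ i j, HasDerivAt (fun s => f s i j) (f' t i j) t)
    (hcont : ∀ i j, ContinuousOn (fun s => f' s i j) (Icc (0 : ℝ) 1))
    (hinv : ∀ t ∈ Icc (0 : ℝ) 1, IsUnit (f t))
    (hbound : ∀ t ∈ Icc (0 : ℝ) 1, frob ((f t)⁻¹ * f' t) ≤ δ) :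
    frob ((f 0)⁻¹ * f 1 - 1) ≤ 2 * δ :=
  matrix_derivative_control_general k δ hδ f f' hderiv hinv hbound
end

section
/- Monotone decrease of sheet count along nested scales: let S be a (k,δ,N)-splitting Reifenberg set, r_i = 2^{−mi} r₀ for i = 0,…,M, and B₂(0) ⊇ B_{r₀}(x₀) ⊇ ⋯ ⊇ B_{r_M}(x_M) nested balls with S ∩ B_{r_i/2}(x_i) ≠ ∅ for each i. If δ < δ(n,N,m,M), then there are at most N indices 0 ≤ i ≤ M with diam(A⊥_{x_i,r_i}) ≥ 2^{−m+2} r_i. -/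
open Metric Set Module Pointwise

noncomputable def localHD {X : Type*} [MetricSpace X] (x : X) (r : ℝ) (A B : Set X) : ℝ :=
  sInf {s : ℝ | 0 < s ∧ A ∩ ball x r ⊆ thickening s B ∧ B ∩ ball x r ⊆ thickening s A}

/-- Distance between two subsets: `inf {|x − y| : x ∈ X, y ∈ Y}`. -/
noncomputable def setDist {X : Type*} [MetricSpace X] (A B : Set X) : ℝ :=
  sInf {d : ℝ | ∃ a ∈ A, ∃ b ∈ B, d = dist a b}

/-- The plane `ℝ^k × {0^{n−k}}` in ℝⁿ. -/
def coordPlane (n k : ℕ) : Set (EuclideanSpace ℝ (Fin n)) :=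
  {x | ∀ i : Fin n, k ≤ (i : ℕ) → x i = 0}

/-- The reduced splitting set
`A⊥_{x,r} = {a ∈ A ∩ (l̂⊥ + x) : dist(l̂ + a, S ∩ B_r(x)) ≤ δ r}`. -/
noncomputable def reducedPerp {n : ℕ} (δ r : ℝ) (x : EuclideanSpace ℝ (Fin n))
    (l : Submodule ℝ (EuclideanSpace ℝ (Fin n)))
    (A S : Set (EuclideanSpace ℝ (Fin n))) : Set (EuclideanSpace ℝ (Fin n)) :=
  {a | a ∈ A ∩ ((fun v => v + x) '' (lᗮ : Set (EuclideanSpace ℝ (Fin n)))) ∧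
    setDist ((fun v => v + a) '' (l : Set (EuclideanSpace ℝ (Fin n)))) (S ∩ ball x r) ≤ δ * r}

/-- The `(k,δ,N)`-splitting Reifenberg condition for `S ⊆ B₂(0ⁿ)`. -/
def SplittingReifenberg (n k N : ℕ) (δ : ℝ) (S : Set (EuclideanSpace ℝ (Fin n))) : Prop :=
  IsClosed S ∧ S ⊆ ball (0 : EuclideanSpace ℝ (Fin n)) 2 ∧
  localHD (0 : EuclideanSpace ℝ (Fin n)) 2 S (coordPlane n k) ≤ 2 * δ ∧
  ∀ x : EuclideanSpace ℝ (Fin n), ∀ r : ℝ, 0 < r →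
    ball x r ⊆ ball (0 : EuclideanSpace ℝ (Fin n)) 2 →
    ∃ l : Submodule ℝ (EuclideanSpace ℝ (Fin n)), ∃ A : Set (EuclideanSpace ℝ (Fin n)),
      finrank ℝ l = k ∧ IsClosed A ∧
      (l : Set (EuclideanSpace ℝ (Fin n))) + A = A ∧
      localHD x r S A ≤ δ * r ∧
      (reducedPerp δ r x l A S).encard ≤ N

/-!
Let `i₀` be the coarsest bad scale. At a bad scale `i` the reduced set `A⊥_i` has two points more
than `3 r_{i+1}` apart, and each of them is within `δ r_i` of the foot on `x_i + l_iᗮ` of some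
point of `S`; so some `t_i ∈ S ∩ B_{r_i}(x_i)` has its foot more than `5/4 r_{i+1}` away from that
of `x_{i+1}`. Every later `t_j` lies in `B_{r_{i+1}}(x_{i+1})`, hence `t_i` and `t_j` are
`r_{i+1}/4`-separated in the direction `l_iᗮ`.

The planes `l_i` and `l_{i₀}` are almost parallel: a segment in direction `u ∈ l_i` inside `A_i`
is `δ`-close to `S`, hence to the at most `N` sheets `l_{i₀} + a`, `a ∈ A⊥_{i₀}`, which bounds the
component of `u` orthogonal to `l_{i₀}` by `16 N δ r_{i₀} ‖u‖ / r_i`; as `l_i` and `l_{i₀}` have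
equal dimension, the projections onto `l_iᗮ` and `l_{i₀}ᗮ` differ by `O(N δ r_{i₀} / r_i)`. So the
separation survives in `l_{i₀}ᗮ`, and the points `t_i` of distinct bad scales lie near distinct
points of `A⊥_{i₀}`, of which there are at most `N`.
-/

section Metric

variable {X : Type*} [MetricSpace X]

theorem setDist_le_dist {A B : Set X} {a b : X} (ha : a ∈ A) (hb : b ∈ B) :
    setDist A B ≤ dist a b := by
  refine csInf_le ⟨0, ?_⟩ ⟨a, ha, b, hb, rfl⟩
  rintro _ ⟨a, -, b, -, rfl⟩
  exact dist_nonneg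

theorem exists_dist_lt_of_setDist_lt {A B : Set X} (hA : A.Nonempty) (hB : B.Nonempty) {c : ℝ}
    (h : setDist A B < c) : ∃ a ∈ A, ∃ b ∈ B, dist a b < c := by
  obtain ⟨a, ha⟩ := hA
  obtain ⟨b, hb⟩ := hB
  obtain ⟨_, ⟨a', ha', b', hb', rfl⟩, hlt⟩ :=
    exists_lt_of_csInf_lt (s := {d | ∃ a ∈ A, ∃ b ∈ B, d = dist a b})
      ⟨_, a, ha, b, hb, rfl⟩ h
  exact ⟨a', ha', b', hb', hlt⟩

theorem localHD_nonneg (x : X) (r : ℝ) (A B : Set X) : 0 ≤ localHD x r A B :=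
  Real.sInf_nonneg fun _ hs => hs.1.le

theorem localHD_comm (x : X) (r : ℝ) (A B : Set X) : localHD x r A B = localHD x r B A := by
  simp only [localHD, and_comm]

theorem infDist_le_of_localHD_le {x p : X} {r c : ℝ} {S A : Set X} (hA : A.Nonempty)
    (h : localHD x r S A ≤ c) (hp : p ∈ S ∩ ball x r) : infDist p A ≤ c := by
  obtain ⟨a, ha⟩ := hA
  have hr : 0 < r := dist_nonneg.trans_lt (mem_ball.1 hp.2)
  -- any radius beyond `r + dist x a + dist x p` is admissible, so the infimum is not junk
  have hadm : {s : ℝ | 0 < s ∧ S ∩ ball x r ⊆ thickening s A ∧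
      A ∩ ball x r ⊆ thickening s S}.Nonempty := by
    refine ⟨r + dist x a + dist x p,
      add_pos_of_pos_of_nonneg (add_pos_of_pos_of_nonneg hr dist_nonneg) dist_nonneg, ?_, ?_⟩
    · rintro q ⟨-, hq⟩
      refine mem_thickening_iff.2 ⟨a, ha, ?_⟩
      linarith [dist_triangle q x a, mem_ball.1 hq, dist_nonneg (x := x) (y := p)]
    · rintro q ⟨-, hq⟩
      refine mem_thickening_iff.2 ⟨p, hp.1, ?_⟩
      linarith [dist_triangle q x p, mem_ball.1 hq, dist_nonneg (x := x) (y := a)]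
  refine le_of_forall_pos_le_add fun ε hε => ?_
  obtain ⟨s, ⟨-, hsS, -⟩, hs⟩ := Real.lt_sInf_add_pos hadm hε
  have := (mem_thickening_iff_infDist_lt ⟨a, ha⟩).1 (hsS hp)
  change s < localHD x r S A + ε at hs
  linarith

theorem exists_dist_le_of_localHD_le [ProperSpace X] {x p : X} {r c : ℝ} {S A : Set X}
    (hA : IsClosed A) (hA₀ : A.Nonempty) (h : localHD x r S A ≤ c) (hp : p ∈ S ∩ ball x r) :
    ∃ w ∈ A, dist p w ≤ c := by
  obtain ⟨w, hw, hpw⟩ := hA.exists_infDist_eq_dist hA₀ p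
  exact ⟨w, hw, hpw ▸ infDist_le_of_localHD_le hA₀ h hp⟩

theorem exists_lt_dist_of_lt_diam {P : Set X} {d : ℝ} (hd : 0 ≤ d) (h : d < diam P) :
    ∃ a ∈ P, ∃ b ∈ P, d < dist a b := by
  by_contra! hP
  exact (diam_le_of_forall_dist_le hd hP).not_gt h

end Metric

theorem Set.subset_of_succ_subset {α : Type*} {s : ℕ → Set α} {M : ℕ}
    (h : ∀ i < M, s (i + 1) ⊆ s i) {i j : ℕ} (hij : i ≤ j) (hj : j ≤ M) : s j ⊆ s i := by
  induction hij with
  | refl => rfl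
  | step hle ih => exact (h _ hj).trans (ih (by omega))

section Segment

variable {E : Type*} [SeminormedAddCommGroup E] [NormedSpace ℝ E]

theorem mul_norm_le_of_forall_mem_Icc_exists_dist_le {p v : E} {T h : ℝ} {P : Set E} {N : ℕ}
    (hT : 0 ≤ T) (hP : P.encard ≤ N) (hcov : ∀ t ∈ Icc 0 T, ∃ a ∈ P, dist (p + t • v) a ≤ h) :
    T * ‖v‖ ≤ N * (2 * h) := by
  by_contra! hlt
  -- pigeonhole on the `N + 1` points `k T / N`, which are pairwise more than `2 h` apart
  have hmem : ∀ k : Fin (N + 1), (k : ℝ) * T / N ∈ Icc 0 T := by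
    intro k
    refine ⟨by positivity, div_le_of_le_mul₀ (Nat.cast_nonneg _) hT ?_⟩
    rw [mul_comm]
    exact mul_le_mul_of_nonneg_left (by exact_mod_cast Nat.lt_succ_iff.1 k.2) hT
  choose a haP ha using fun k => hcov _ (hmem k)
  have hinj : Function.Injective a := by
    intro k k' hkk'
    by_contra hne
    have hne' : (k : ℕ) ≠ k' := Fin.val_ne_of_ne hne
    have hN : (0 : ℝ) < N := by
      have := k.2; have := k'.2
      exact_mod_cast (show 0 < N by omega)
    have hk : (1 : ℝ) ≤ |(k : ℝ) - k'| := by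
      have : (1 : ℤ) ≤ |(k : ℤ) - k'| := Int.one_le_abs (by omega)
      exact_mod_cast this
    have hdist : dist (p + ((k : ℝ) * T / N) • v) (p + ((k' : ℝ) * T / N) • v)
        = |(k : ℝ) - k'| * (T * ‖v‖ / N) := by
      rw [dist_add_left, dist_eq_norm, ← sub_smul, norm_smul, Real.norm_eq_abs,
        ← sub_div, ← sub_mul, abs_div, abs_mul, abs_of_nonneg hT, abs_of_pos hN]
      ring
    have h2h : 2 * h < T * ‖v‖ / N := by rwa [lt_div_iff₀ hN, mul_comm]
    have hak := ha k
    rw [hkk'] at hak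
    have := dist_triangle_right (p + ((k : ℝ) * T / N) • v) (p + ((k' : ℝ) * T / N) • v) (a k')
    rw [hdist] at this
    nlinarith [ha k', dist_nonneg (x := p + ((k' : ℝ) * T / N) • v) (y := a k')]
  have := Set.encard_le_encard_of_injOn (s := univ) (fun k _ => haP k) hinj.injOn
  simp only [encard_univ, ENat.card_eq_coe_fintype_card, Fintype.card_fin] at this
  exact absurd (this.trans hP) (by norm_cast; omega)

end Segment

section Projection

variable {V : Type*} [NormedAddCommGroup V] [InnerProductSpace ℝ V]

noncomputable def perpFoot (l : Submodule ℝ V) [l.HasOrthogonalProjection] (x p : V) : V :=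
  x + lᗮ.starProjection (p - x)

section perpFoot

variable (l : Submodule ℝ V) [l.HasOrthogonalProjection]

theorem perpFoot_sub_perpFoot (x p q : V) :
    perpFoot l x p - perpFoot l x q = lᗮ.starProjection (p - q) := by
  simp only [perpFoot, map_sub]
  abel

theorem dist_perpFoot_perpFoot (x p q : V) :
    dist (perpFoot l x p) (perpFoot l x q) = ‖lᗮ.starProjection (p - q)‖ := by
  rw [dist_eq_norm, perpFoot_sub_perpFoot]

theorem dist_perpFoot_le (x p q : V) : dist (perpFoot l x p) (perpFoot l x q) ≤ dist p q := by
  rw [dist_perpFoot_perpFoot, dist_eq_norm]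
  exact lᗮ.norm_starProjection_apply_le _

theorem perpFoot_eq_sub (x p : V) : perpFoot l x p = p - l.starProjection (p - x) := by
  rw [perpFoot, Submodule.starProjection_orthogonal_val]
  abel

theorem perpFoot_add_smul (x p v : V) (t : ℝ) :
    perpFoot l x (p + t • v) = perpFoot l x p + t • lᗮ.starProjection v := by
  simp only [perpFoot, add_sub_right_comm p, map_add, map_smul]
  abel

variable {l}

theorem perpFoot_add_of_mem {v : V} (hv : v ∈ l) (x p : V) :
    perpFoot l x (v + p) = perpFoot l x p := by
  rw [add_comm, ← one_smul ℝ v, perpFoot_add_smul,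
    Submodule.starProjection_orthogonal_apply_eq_zero hv, smul_zero, add_zero]

theorem perpFoot_of_sub_mem_orthogonal {x p : V} (h : p - x ∈ lᗮ) : perpFoot l x p = p := by
  rw [perpFoot, Submodule.starProjection_eq_self_iff.2 h, add_sub_cancel]

end perpFoot

theorem norm_starProjection_le_of_mem_orthogonal {l l' : Submodule ℝ V}
    [l.HasOrthogonalProjection] {η : ℝ} (hη : 0 ≤ η)
    (h : ∀ z ∈ l, ∃ u ∈ l', ‖z - u‖ ≤ η * ‖z‖) {w : V} (hw : w ∈ l'ᗮ) :
    ‖l.starProjection w‖ ≤ η * ‖w‖ := by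
  set z := l.starProjection w
  obtain ⟨u, hu, hzu⟩ := h z (l.starProjection_apply_mem w)
  have hz : ‖z‖ ^ 2 = inner ℝ w (z - u) := by
    have hPz : l.starProjection z = z :=
      Submodule.starProjection_eq_self_iff.2 (l.starProjection_apply_mem w)
    rw [inner_sub_right, Submodule.inner_left_of_mem_orthogonal hu hw, sub_zero,
      ← real_inner_self_eq_norm_sq]
    calc inner ℝ z z = inner ℝ w (l.starProjection z) :=
          l.inner_starProjection_left_eq_right w z
      _ = inner ℝ w z := by rw [hPz]
  have : ‖z‖ ^ 2 ≤ ‖w‖ * (η * ‖z‖) :=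
    hz ▸ (real_inner_le_norm _ _).trans (mul_le_mul_of_nonneg_left hzu (norm_nonneg w))
  nlinarith [norm_nonneg z, norm_nonneg w, mul_nonneg hη (norm_nonneg w)]

variable [FiniteDimensional ℝ V]

theorem exists_norm_sub_le_of_norm_starProjection_orthogonal_le {l l' : Submodule ℝ V}
    (hrk : finrank ℝ l = finrank ℝ l') {ε : ℝ} (hε₀ : 0 ≤ ε) (hε : ε ≤ 1 / 2)
    (h : ∀ u ∈ l', ‖lᗮ.starProjection u‖ ≤ ε * ‖u‖) {z : V} (hz : z ∈ l) :
    ∃ u ∈ l', ‖z - u‖ ≤ 2 * ε * ‖z‖ := by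
  set f : l' →ₗ[ℝ] l := l.orthogonalProjectionOnto.toLinearMap ∘ₗ l'.subtype
  have hinj : Function.Injective f := by
    refine (injective_iff_map_eq_zero f).2 fun u hu => ?_
    have hlu : l.starProjection u = 0 := congrArg Subtype.val hu
    have hu' : ‖(u : V)‖ ≤ ε * ‖(u : V)‖ := by
      simpa [Submodule.starProjection_orthogonal_val, hlu] using h u u.2
    exact Subtype.ext (norm_le_zero_iff.1 (by nlinarith [norm_nonneg (u : V)]))
  obtain ⟨u, hu⟩ := (LinearMap.injective_iff_surjective_of_finrank_eq_finrank hrk.symm).1 hinj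
    ⟨z, hz⟩
  have hzu : z - u = -lᗮ.starProjection u := by
    have hlu : l.starProjection u = z := congrArg Subtype.val hu
    rw [Submodule.starProjection_orthogonal_val, hlu]
    abel
  have hdist : ‖z - u‖ ≤ ε * ‖(u : V)‖ := by rw [hzu, norm_neg]; exact h u u.2
  have hu_le : ‖(u : V)‖ ≤ 2 * ‖z‖ := by
    have := norm_sub_norm_le (u : V) z
    rw [norm_sub_rev] at this
    nlinarith [mul_le_mul_of_nonneg_right hε (norm_nonneg (u : V))]
  exact ⟨u, u.2, hdist.trans (by nlinarith)⟩

theorem norm_starProjection_orthogonal_sub_le {l l' : Submodule ℝ V}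
    (hrk : finrank ℝ l = finrank ℝ l') {ε : ℝ} (hε₀ : 0 ≤ ε) (hε : ε ≤ 1 / 2)
    (h : ∀ u ∈ l', ‖lᗮ.starProjection u‖ ≤ ε * ‖u‖) (w : V) :
    ‖lᗮ.starProjection w - l'ᗮ.starProjection w‖ ≤ 3 * ε * ‖w‖ := by
  set v := l'.starProjection w
  set u := l'ᗮ.starProjection w
  have hdecomp : lᗮ.starProjection w - u = lᗮ.starProjection v - l.starProjection u := by
    rw [← l'.starProjection_add_starProjection_orthogonal w, map_add,
      Submodule.starProjection_orthogonal_val (K := l) u]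
    abel
  have hv : ‖lᗮ.starProjection v‖ ≤ ε * ‖w‖ :=
    (h v (l'.starProjection_apply_mem w)).trans
      (mul_le_mul_of_nonneg_left (l'.norm_starProjection_apply_le w) hε₀)
  have hu : ‖l.starProjection u‖ ≤ 2 * ε * ‖w‖ :=
    (norm_starProjection_le_of_mem_orthogonal (by positivity)
      (fun z hz => exists_norm_sub_le_of_norm_starProjection_orthogonal_le hrk hε₀ hε h hz)
      (l'ᗮ.starProjection_apply_mem w)).trans
      (mul_le_mul_of_nonneg_left (l'ᗮ.norm_starProjection_apply_le w) (by positivity))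
  calc ‖lᗮ.starProjection w - u‖ ≤ ‖lᗮ.starProjection v‖ + ‖l.starProjection u‖ := by
        rw [hdecomp]; exact norm_sub_le _ _
    _ ≤ 3 * ε * ‖w‖ := by linarith

end Projection

section Splitting

variable {n : ℕ}

/-- `A` is a splitting set `A_{x,r} = l + A⊥_{x,r}` approximating `S` in `B_r(x)`. -/
structure IsSplittingApprox (S : Set (EuclideanSpace ℝ (Fin n))) (δ : ℝ)
    (x : EuclideanSpace ℝ (Fin n)) (r : ℝ) (l : Submodule ℝ (EuclideanSpace ℝ (Fin n)))
    (A : Set (EuclideanSpace ℝ (Fin n))) : Prop where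
  isClosed : IsClosed A
  add_eq : (l : Set (EuclideanSpace ℝ (Fin n))) + A = A
  localHD_le : localHD x r S A ≤ δ * r

variable {S A A' : Set (EuclideanSpace ℝ (Fin n))} {δ r ρ : ℝ} {x y : EuclideanSpace ℝ (Fin n)}
  {l l' : Submodule ℝ (EuclideanSpace ℝ (Fin n))}

theorem perpFoot_mem_reducedPerp (hlA : (l : Set (EuclideanSpace ℝ (Fin n))) + A = A)
    {w z : EuclideanSpace ℝ (Fin n)} (hw : w ∈ A) (hz : z ∈ S ∩ ball x r)
    (hwz : dist w z ≤ δ * r) :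
    perpFoot l x w ∈ reducedPerp δ r x l A S := by
  have hmem : -l.starProjection (w - x) ∈ l := l.neg_mem (l.starProjection_apply_mem _)
  refine ⟨⟨?_, _, lᗮ.starProjection_apply_mem _, add_comm _ _⟩, ?_⟩
  · rw [perpFoot_eq_sub, sub_eq_neg_add, ← hlA]
    exact Set.add_mem_add hmem hw
  · refine (setDist_le_dist (A := (· + perpFoot l x w) '' (l : Set (EuclideanSpace ℝ (Fin n))))
      ⟨l.starProjection (w - x), l.starProjection_apply_mem _, ?_⟩ hz).trans hwz
    simp only [perpFoot_eq_sub, add_sub_cancel]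

theorem exists_dist_perpFoot_lt_of_mem_reducedPerp {a : EuclideanSpace ℝ (Fin n)}
    (ha : a ∈ reducedPerp δ r x l A S) (hS : (S ∩ ball x r).Nonempty) {c : ℝ} (hc : δ * r < c) :
    ∃ s ∈ S ∩ ball x r, dist (perpFoot l x s) a < c := by
  obtain ⟨⟨-, v, hv, rfl⟩, hdist⟩ := ha
  obtain ⟨_, ⟨w, hw, rfl⟩, s, hs, hws⟩ :=
    exists_dist_lt_of_setDist_lt (by exact ⟨_, 0, l.zero_mem, rfl⟩) hS (hdist.trans_lt hc)
  beta_reduce at hws ⊢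
  have hfoot : perpFoot l x (v + x) = v + x :=
    perpFoot_of_sub_mem_orthogonal (by rwa [add_sub_cancel_right])
  refine ⟨s, hs, ?_⟩
  rw [← hfoot, ← perpFoot_add_of_mem hw x (v + x), dist_comm]
  exact (dist_perpFoot_le l x _ _).trans_lt hws

theorem exists_lt_dist_perpFoot_of_mem_reducedPerp {a b : EuclideanSpace ℝ (Fin n)}
    (ha : a ∈ reducedPerp δ r x l A S) (hb : b ∈ reducedPerp δ r x l A S)
    (hS : (S ∩ ball x r).Nonempty) {c : ℝ} (hc : δ * r < c) (z : EuclideanSpace ℝ (Fin n)) :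
    ∃ s ∈ S ∩ ball x r, dist a b / 2 - c < dist (perpFoot l x s) (perpFoot l x z) := by
  obtain ⟨s, hs, hsa⟩ := exists_dist_perpFoot_lt_of_mem_reducedPerp ha hS hc
  obtain ⟨s', hs', hs'b⟩ := exists_dist_perpFoot_lt_of_mem_reducedPerp hb hS hc
  have := dist_triangle4 a (perpFoot l x s) (perpFoot l x s') b
  have := dist_triangle_right (perpFoot l x s) (perpFoot l x s') (perpFoot l x z)
  by_cases hfar : dist a b / 2 - c < dist (perpFoot l x s) (perpFoot l x z)
  · exact ⟨s, hs, hfar⟩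
  · refine ⟨s', hs', ?_⟩
    rw [dist_comm] at hsa
    linarith

namespace IsSplittingApprox

theorem exists_mem_reducedPerp_dist_le (h : IsSplittingApprox S δ x r l A) (hA : A.Nonempty)
    {p : EuclideanSpace ℝ (Fin n)} (hp : p ∈ S ∩ ball x r) :
    ∃ a ∈ reducedPerp δ r x l A S, dist (perpFoot l x p) a ≤ δ * r := by
  obtain ⟨w, hw, hpw⟩ := exists_dist_le_of_localHD_le h.isClosed hA h.localHD_le hp
  refine ⟨_, perpFoot_mem_reducedPerp h.add_eq hw hp (by rwa [dist_comm]), ?_⟩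
  exact (dist_perpFoot_le l x p w).trans hpw

theorem exists_mem_reducedPerp_dist_le_of_mem (h : IsSplittingApprox S δ x r l A)
    (hA : A.Nonempty) (h' : IsSplittingApprox S δ y ρ l' A') (hS : IsClosed S)
    (hS₀ : S.Nonempty) (hball : ball y ρ ⊆ ball x r) {q : EuclideanSpace ℝ (Fin n)}
    (hq : q ∈ A') (hqy : dist q y + δ * ρ < ρ) :
    ∃ a ∈ reducedPerp δ r x l A S, dist (perpFoot l x q) a ≤ δ * ρ + δ * r := by
  have hδρ : 0 ≤ δ * ρ := (localHD_nonneg _ _ _ _).trans h'.localHD_le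
  obtain ⟨s, hs, hqs⟩ := exists_dist_le_of_localHD_le hS hS₀
    ((localHD_comm _ _ _ _).trans_le h'.localHD_le) ⟨hq, mem_ball.2 (by linarith)⟩
  have hsx : s ∈ ball x r :=
    hball (mem_ball.2 (by linarith [dist_triangle s q y, dist_comm q s]))
  obtain ⟨a, ha, hsa⟩ := h.exists_mem_reducedPerp_dist_le hA ⟨hs, hsx⟩
  refine ⟨a, ha, ?_⟩
  calc dist (perpFoot l x q) a
    _ ≤ dist (perpFoot l x q) (perpFoot l x s) + dist (perpFoot l x s) a := dist_triangle _ _ _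
    _ ≤ δ * ρ + δ * r := add_le_add ((dist_perpFoot_le l x q s).trans hqs) hsa

theorem norm_starProjection_orthogonal_le (h : IsSplittingApprox S δ x r l A) (hA : A.Nonempty)
    {N : ℕ} (hN : (reducedPerp δ r x l A S).encard ≤ N) (h' : IsSplittingApprox S δ y ρ l' A')
    (hA' : A'.Nonempty) (hS : IsClosed S) (hδ : δ ≤ 1 / 8) (hρr : ρ ≤ r)
    (hball : ball y ρ ⊆ ball x r) {s₀ : EuclideanSpace ℝ (Fin n)}
    (hs₀ : s₀ ∈ S ∩ ball y (ρ / 2)) {u : EuclideanSpace ℝ (Fin n)} (hu : u ∈ l') :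
    ‖lᗮ.starProjection u‖ ≤ 16 * N * δ * r / ρ * ‖u‖ := by
  have hs₀y := mem_ball.1 hs₀.2
  have hρ : 0 < ρ := by linarith [dist_nonneg (x := s₀) (y := y)]
  have hδρ : 0 ≤ δ * ρ := (localHD_nonneg _ _ _ _).trans h'.localHD_le
  have hδr : δ * ρ ≤ δ * r := mul_le_mul_of_nonneg_left hρr (nonneg_of_mul_nonneg_left hδρ hρ)
  obtain ⟨q₀, hq₀, hs₀q₀⟩ := exists_dist_le_of_localHD_le h'.isClosed hA' h'.localHD_le
    ⟨hs₀.1, ball_subset_ball (half_le_self hρ.le) hs₀.2⟩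
  rcases eq_or_ne u 0 with rfl | hu₀
  · simp
  have hu_pos : 0 < ‖u‖ := norm_pos_iff.2 hu₀
  -- the segment `q₀ + [0, ρ / 4] • (u / ‖u‖)` lies in `A'` near `y`, and its feet are
  -- covered by the `2 δ r`-balls around the at most `N` points of `reducedPerp`
  have hcov : ∀ t ∈ Icc 0 (ρ / (4 * ‖u‖)), ∃ a ∈ reducedPerp δ r x l A S,
      dist (perpFoot l x q₀ + t • lᗮ.starProjection u) a ≤ 2 * (δ * r) := by
    rintro t ⟨ht₀, ht⟩
    rw [← perpFoot_add_smul]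
    have hq : q₀ + t • u ∈ A' := by
      rw [← h'.add_eq, add_comm q₀]
      exact Set.add_mem_add (l'.smul_mem t hu) hq₀
    have htu : t * ‖u‖ ≤ ρ / 4 := by
      rwa [le_div_iff₀ (by positivity), mul_comm 4, ← mul_assoc, ← le_div_iff₀ four_pos] at ht
    have hqy : dist (q₀ + t • u) y + δ * ρ < ρ := by
      have : dist (q₀ + t • u) q₀ = t * ‖u‖ := by
        rw [dist_eq_norm, add_sub_cancel_left, norm_smul, Real.norm_of_nonneg ht₀]
      linarith [dist_triangle4 (q₀ + t • u) q₀ s₀ y, dist_comm q₀ s₀,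
        mul_le_mul_of_nonneg_right hδ hρ.le]
    obtain ⟨a, ha, hqa⟩ :=
      h.exists_mem_reducedPerp_dist_le_of_mem hA h' hS ⟨s₀, hs₀.1⟩ hball hq hqy
    exact ⟨a, ha, by linarith⟩
  have := mul_norm_le_of_forall_mem_Icc_exists_dist_le (by positivity) hN hcov
  rw [div_mul_eq_mul_div, div_le_iff₀ (by positivity)] at this
  rw [div_mul_eq_mul_div, le_div_iff₀ hρ]
  linarith

end IsSplittingApprox

end Splitting

/-- `small` is where `δ < δ(N, m, M)` enters: `1000 (N + 1)` absorbs the tilt error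
`96 N δ r_{i₀}` in `lt_dist_perpFoot`. -/
structure SplittingScales {n : ℕ} (S : Set (EuclideanSpace ℝ (Fin n))) (δ : ℝ) (N M k : ℕ)
    (r : ℕ → ℝ) (x : ℕ → EuclideanSpace ℝ (Fin n))
    (l : ℕ → Submodule ℝ (EuclideanSpace ℝ (Fin n)))
    (A : ℕ → Set (EuclideanSpace ℝ (Fin n))) : Prop where
  isClosed : IsClosed S
  pos : ∀ i, 0 < r i
  antitone : Antitone r
  small : ∀ i ≤ M + 1, ∀ j, 1000 * (N + 1) * (δ * r j) ≤ r i
  nested : ∀ i < M, ball (x (i + 1)) (r (i + 1)) ⊆ ball (x i) (r i)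
  nonempty : ∀ i ≤ M, (S ∩ ball (x i) (r i / 2)).Nonempty
  finrank_eq : ∀ i ≤ M, finrank ℝ (l i) = k
  splitting : ∀ i ≤ M, IsSplittingApprox S δ (x i) (r i) (l i) (A i)
  encard_le : ∀ i ≤ M, (reducedPerp δ (r i) (x i) (l i) (A i) S).encard ≤ N

namespace SplittingScales

variable {n : ℕ} {S : Set (EuclideanSpace ℝ (Fin n))} {δ : ℝ} {N M k : ℕ} {r : ℕ → ℝ}
  {x : ℕ → EuclideanSpace ℝ (Fin n)} {l : ℕ → Submodule ℝ (EuclideanSpace ℝ (Fin n))}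
  {A : ℕ → Set (EuclideanSpace ℝ (Fin n))}

theorem ball_subset (H : SplittingScales S δ N M k r x l A) {i j : ℕ} (hij : i ≤ j)
    (hj : j ≤ M) :
    ball (x j) (r j) ⊆ ball (x i) (r i) :=
  Set.subset_of_succ_subset (s := fun i => ball (x i) (r i)) H.nested hij hj

theorem delta_nonneg (H : SplittingScales S δ N M k r x l A) : 0 ≤ δ :=
  nonneg_of_mul_nonneg_left
    ((localHD_nonneg _ _ _ _).trans (H.splitting 0 M.zero_le).localHD_le) (H.pos 0)

theorem delta_le (H : SplittingScales S δ N M k r x l A) : δ ≤ 1 / 8 := by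
  have hsmall := H.small 0 (by omega) 0
  have hr := H.pos 0
  nlinarith [mul_nonneg (Nat.cast_nonneg (α := ℝ) N) (mul_nonneg H.delta_nonneg hr.le)]

theorem nonempty_of_le_diam (H : SplittingScales S δ N M k r x l A) {i : ℕ}
    (hdiam : 4 * r (i + 1) ≤ diam (reducedPerp δ (r i) (x i) (l i) (A i) S)) :
    (A i).Nonempty := by
  by_contra hA
  have hempty : reducedPerp δ (r i) (x i) (l i) (A i) S = ∅ :=
    Set.eq_empty_of_forall_notMem fun a ha => hA ⟨a, ha.1.1⟩
  rw [hempty, diam_empty] at hdiam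
  linarith [H.pos (i + 1)]

theorem exists_lt_dist_perpFoot (H : SplittingScales S δ N M k r x l A) {i : ℕ} (hi : i ≤ M)
    (hdiam : 4 * r (i + 1) ≤ diam (reducedPerp δ (r i) (x i) (l i) (A i) S)) :
    ∃ t ∈ S ∩ ball (x i) (r i),
      5 / 4 * r (i + 1) < dist (perpFoot (l i) (x i) t) (perpFoot (l i) (x i) (x (i + 1))) := by
  have hr := H.pos (i + 1)
  obtain ⟨a, ha, b, hb, hab⟩ := exists_lt_dist_of_lt_diam (by positivity : 0 ≤ 3 * r (i + 1))
    (by linarith)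
  obtain ⟨s, hs⟩ := H.nonempty i hi
  have hδr : δ * r i < r (i + 1) / 4 := by
    have := H.small (i + 1) (by omega) i
    have := mul_nonneg H.delta_nonneg (H.pos i).le
    nlinarith [Nat.cast_nonneg (α := ℝ) N]
  obtain ⟨t, ht, hfar⟩ := exists_lt_dist_perpFoot_of_mem_reducedPerp ha hb
    ⟨s, hs.1, ball_subset_ball (half_le_self (H.pos i).le) hs.2⟩ hδr (x (i + 1))
  exact ⟨t, ht, by linarith⟩

theorem norm_starProjection_orthogonal_sub_le (H : SplittingScales S δ N M k r x l A) {i j : ℕ}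
    (hij : i ≤ j) (hj : j ≤ M) (hAi : (A i).Nonempty) (hAj : (A j).Nonempty)
    (w : EuclideanSpace ℝ (Fin n)) :
    ‖(l i)ᗮ.starProjection w - (l j)ᗮ.starProjection w‖ ≤ 48 * N * δ * r i / r j * ‖w‖ := by
  have hi : i ≤ M := hij.trans hj
  have hε : 16 * N * δ * r i / r j ≤ 1 / 2 := by
    rw [div_le_iff₀ (H.pos j)]
    have := H.small j (by omega) i
    have := mul_nonneg H.delta_nonneg (H.pos i).le
    nlinarith [Nat.cast_nonneg (α := ℝ) N]
  have htilt := fun u (hu : u ∈ l j) => (H.splitting i hi).norm_starProjection_orthogonal_le hAi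
    (H.encard_le i hi) (H.splitting j hj) hAj H.isClosed H.delta_le (H.antitone hij)
    (H.ball_subset hij hj) (H.nonempty j hj).some_mem hu
  have hε₀ : 0 ≤ 16 * N * δ * r i / r j :=
    div_nonneg (mul_nonneg (by positivity [H.delta_nonneg]) (H.pos i).le) (H.pos j).le
  refine (_root_.norm_starProjection_orthogonal_sub_le ((H.finrank_eq i hi).trans
    (H.finrank_eq j hj).symm) hε₀ hε htilt w).trans_eq ?_
  ring

theorem lt_dist_perpFoot (H : SplittingScales S δ N M k r x l A) {i₀ i : ℕ} (hi₀ : i₀ ≤ i)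
    (hi : i < M) (hA₀ : (A i₀).Nonempty) (hA : (A i).Nonempty) {t t' : EuclideanSpace ℝ (Fin n)}
    (ht : t ∈ ball (x i) (r i))
    (hft : 5 / 4 * r (i + 1) < dist (perpFoot (l i) (x i) t) (perpFoot (l i) (x i) (x (i + 1))))
    (ht' : t' ∈ ball (x (i + 1)) (r (i + 1))) :
    2 * (δ * r i₀) < dist (perpFoot (l i₀) (x i₀) t) (perpFoot (l i₀) (x i₀) t') := by
  have ht'i : t' ∈ ball (x i) (r i) := H.ball_subset i.le_succ hi ht'
  have hw : ‖t - t'‖ < 2 * r i := by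
    rw [← dist_eq_norm]
    linarith [dist_triangle_right t t' (x i), mem_ball.1 ht, mem_ball.1 ht'i]
  have hfar : r (i + 1) / 4 < ‖(l i)ᗮ.starProjection (t - t')‖ := by
    rw [← dist_perpFoot_perpFoot (l i) (x i)]
    linarith [dist_triangle (perpFoot (l i) (x i) t) (perpFoot (l i) (x i) t')
      (perpFoot (l i) (x i) (x (i + 1))), dist_perpFoot_le (l i) (x i) t' (x (i + 1)),
      mem_ball.1 ht']
  have htilt : 48 * N * δ * r i₀ / r i * ‖t - t'‖ ≤ 96 * N * δ * r i₀ := by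
    rw [div_mul_eq_mul_div, div_le_iff₀ (H.pos i)]
    have := mul_nonneg (mul_nonneg (Nat.cast_nonneg (α := ℝ) N) H.delta_nonneg) (H.pos i₀).le
    nlinarith
  have hsmall := H.small (i + 1) (by omega) i₀
  have := mul_nonneg H.delta_nonneg (H.pos i₀).le
  rw [dist_perpFoot_perpFoot]
  nlinarith [norm_le_norm_add_norm_sub ((l i₀)ᗮ.starProjection (t - t'))
    ((l i)ᗮ.starProjection (t - t')), H.norm_starProjection_orthogonal_sub_le hi₀ hi.le hA₀ hA
    (t - t'), Nat.cast_nonneg (α := ℝ) N]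

theorem encard_setOf_le_diam_le (H : SplittingScales S δ N M k r x l A) :
    {i | i ≤ M ∧ 4 * r (i + 1) ≤ diam (reducedPerp δ (r i) (x i) (l i) (A i) S)}.encard ≤ N := by
  set bad := {i | i ≤ M ∧ 4 * r (i + 1) ≤ diam (reducedPerp δ (r i) (x i) (l i) (A i) S)}
  rcases bad.eq_empty_or_nonempty with hbad | hbad
  · simp [hbad]
  obtain ⟨i₀, hi₀, hmin⟩ : ∃ i₀ ∈ bad, ∀ i ∈ bad, i₀ ≤ i :=
    ⟨sInf bad, Nat.sInf_mem hbad, fun i hi => Nat.sInf_le hi⟩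
  choose! t ht hft using fun i (hi : i ∈ bad) => H.exists_lt_dist_perpFoot hi.1 hi.2
  -- every bad scale contributes a sheet at the coarsest bad scale `i₀`
  choose! a ha hta using fun i (hi : i ∈ bad) =>
    (H.splitting i₀ hi₀.1).exists_mem_reducedPerp_dist_le (H.nonempty_of_le_diam hi₀.2)
      ⟨(ht i hi).1, H.ball_subset (hmin i hi) hi.1 (ht i hi).2⟩
  have hne : ∀ i ∈ bad, ∀ j ∈ bad, i < j → a i ≠ a j := by
    intro i hi j hj hij haij
    have := H.lt_dist_perpFoot (hmin i hi) (hij.trans_le hj.1) (H.nonempty_of_le_diam hi₀.2)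
      (H.nonempty_of_le_diam hi.2) (ht i hi).2 (hft i hi) (H.ball_subset hij hj.1 (ht j hj).2)
    have := dist_triangle4 (perpFoot (l i₀) (x i₀) (t i)) (a i) (a j) (perpFoot (l i₀) (x i₀) (t j))
    have hti := hta i hi
    rw [haij] at this hti
    rw [dist_self, dist_comm (a j)] at this
    linarith [hta j hj]
  have hinj : InjOn a bad := fun i hi j hj haij => by
    by_contra hij
    rcases lt_or_gt_of_ne hij with hij | hij
    exacts [hne i hi j hj hij haij, hne j hj i hi hij haij.symm]
  exact (encard_le_encard_of_injOn (fun i hi => ha i hi) hinj).trans (H.encard_le i₀ hi₀.1)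

end SplittingScales

section GeometricScales

variable {m : ℕ}

theorem two_zpow_neg_mul_le_of_le {i j : ℕ} (hij : i ≤ j) :
    (2 : ℝ) ^ (-(m * j : ℤ)) ≤ 2 ^ (-(m * i : ℤ)) :=
  zpow_le_zpow_right₀ one_le_two (neg_le_neg (by exact_mod_cast Nat.mul_le_mul_left m hij))

theorem two_zpow_two_sub_mul_two_zpow_neg_mul (i : ℕ) :
    (2 : ℝ) ^ ((2 : ℤ) - m) * 2 ^ (-(m * i : ℤ)) = 4 * 2 ^ (-(m * (i + 1 : ℕ) : ℤ)) := by
  rw [← zpow_add₀ two_ne_zero, show (4 : ℝ) = 2 ^ (2 : ℤ) by norm_num, ← zpow_add₀ two_ne_zero]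
  congr 1
  push_cast
  ring

theorem mul_delta_mul_le_of_lt {M N : ℕ} {δ r₀ : ℝ} {r : ℕ → ℝ}
    (hr : ∀ i, r i = (2 : ℝ) ^ (-(m * i : ℤ)) * r₀) (hr₀ : 0 < r₀) (hδ : 0 < δ)
    (hδ₀ : δ < 2 ^ (-(m * (M + 1) : ℤ)) / (1000 * (N + 1))) {i : ℕ} (hi : i ≤ M + 1) (j : ℕ) :
    1000 * (N + 1) * (δ * r j) ≤ r i := by
  have hrj : r j ≤ r₀ := by
    rw [hr]
    exact mul_le_of_le_one_left hr₀.le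
      (zpow_le_one_of_nonpos₀ one_le_two (neg_nonpos.2 (by positivity)))
  have hri : 2 ^ (-(m * (M + 1) : ℤ)) * r₀ ≤ r i := by
    rw [hr]
    exact mul_le_mul_of_nonneg_right (by exact_mod_cast two_zpow_neg_mul_le_of_le hi) hr₀.le
  rw [lt_div_iff₀ (by positivity)] at hδ₀
  calc 1000 * (N + 1) * (δ * r j) ≤ δ * (1000 * (N + 1)) * r₀ := by
        nlinarith [mul_le_mul_of_nonneg_left hrj hδ.le]
    _ ≤ r i := by nlinarith

end GeometricScales

/-- Along nested balls with rapidly decreasing scales, at most `N` scales can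
have large reduced splitting set. -/
theorem finitely_many_bad_scales (n k N m M : ℕ) :
    ∃ δ₀ > (0 : ℝ), ∀ δ : ℝ, 0 < δ → δ < δ₀ →
      ∀ S : Set (EuclideanSpace ℝ (Fin n)), SplittingReifenberg n k N δ S →
      ∀ r₀ : ℝ, 0 < r₀ →
      ∀ r : ℕ → ℝ, (∀ i, r i = (2 : ℝ) ^ (-(m * i : ℤ)) * r₀) →
      ∀ x : ℕ → EuclideanSpace ℝ (Fin n),
      ∀ A : ℕ → Set (EuclideanSpace ℝ (Fin n)),
      ∀ l : ℕ → Submodule ℝ (EuclideanSpace ℝ (Fin n)),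
        ball (x 0) (r 0) ⊆ ball (0 : EuclideanSpace ℝ (Fin n)) 2 →
        (∀ i < M, ball (x (i + 1)) (r (i + 1)) ⊆ ball (x i) (r i)) →
        (∀ i ≤ M, (S ∩ ball (x i) (r i / 2)).Nonempty) →
        (∀ i ≤ M, finrank ℝ (l i) = k ∧ IsClosed (A i) ∧
          (l i : Set (EuclideanSpace ℝ (Fin n))) + A i = A i ∧
          localHD (x i) (r i) S (A i) ≤ δ * r i ∧
          (reducedPerp δ (r i) (x i) (l i) (A i) S).encard ≤ N) →
        {i : ℕ | i ≤ M ∧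
          (2 : ℝ) ^ ((2 : ℤ) - m) * r i ≤
            Metric.diam (reducedPerp δ (r i) (x i) (l i) (A i) S)}.encard ≤ N := by
  refine ⟨2 ^ (-(m * (M + 1) : ℤ)) / (1000 * (N + 1)), by positivity, ?_⟩
  intro δ hδ hδ₀ S hS r₀ hr₀ r hr x A l _ hnest hSx hdata
  have H : SplittingScales S δ N M k r x l A :=
    { isClosed := hS.1
      pos := fun i => by rw [hr]; positivity
      antitone := fun i j hij => by
        rw [hr, hr]
        exact mul_le_mul_of_nonneg_right (two_zpow_neg_mul_le_of_le hij) hr₀.le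
      small := fun i hi => mul_delta_mul_le_of_lt hr hr₀ hδ hδ₀ hi
      nested := hnest
      nonempty := hSx
      finrank_eq := fun i hi => (hdata i hi).1
      splitting := fun i hi => ⟨(hdata i hi).2.1, (hdata i hi).2.2.1, (hdata i hi).2.2.2.1⟩
      encard_le := fun i hi => (hdata i hi).2.2.2.2 }
  have hbad : ∀ i, (2 : ℝ) ^ ((2 : ℤ) - m) * r i = 4 * r (i + 1) := fun i => by
    rw [hr, hr, ← mul_assoc, two_zpow_two_sub_mul_two_zpow_neg_mul, mul_assoc]
  simpa only [hbad] using H.encard_setOf_le_diam_le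
end

section
/- Point-selection lemma: for every l ∈ ℕ and n ∈ ℕ there exists N(l,n) ∈ ℕ such that among any N(l,n) distinct points in ℝⁿ one can choose points x₀, x₁, …, x_l with |x₀ − x_i| > 2|x₀ − x_{i−1}| for all 2 ≤ i ≤ l. -/
/-! Fix a scale `D = diam X`. By compactness of the unit ball and rescaling, `X` is covered by a
number `K` of balls of radius `D / 8` that does not depend on `X`, so by pigeonhole one of them
contains more than `N` points once `#X > K N`. Inside such a ball choose inductively a chain
`x₀, …, x_{l-1}`; every point of `X` lies within `D` of every other, so some `z ∈ X` is at
distance at least `D / 2` from `x₀`, more than twice `dist x₀ x_{l-1} < D / 4`. -/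

open Metric Set

section PseudoMetric

variable {α : Type*} [PseudoMetricSpace α]

/-- At `i = 0` the condition reads `0 < dist (x 0) (x 1)`, so the distances to `x 0` strictly
increase along the chain. -/
def IsExpandingChain (x : ℕ → α) (l : ℕ) : Prop :=
  ∀ i < l, 2 * dist (x 0) (x i) < dist (x 0) (x (i + 1))

namespace IsExpandingChain

variable {x : ℕ → α} {l : ℕ}

theorem strictMonoOn_dist (h : IsExpandingChain x l) :
    StrictMonoOn (fun i => dist (x 0) (x i)) (Iic l) :=
  strictMonoOn_Iic_of_lt_succ fun i hi => by
    have := h i hi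
    simp only [Order.succ_eq_add_one]
    linarith [dist_nonneg (x := x 0) (y := x i)]

theorem injOn (h : IsExpandingChain x l) : InjOn x (Iic l) :=
  InjOn.of_comp (f := x) (g := fun y => dist (x 0) y) h.strictMonoOn_dist.injOn

theorem update_succ (h : IsExpandingChain x l) {z : α}
    (hz : 2 * dist (x 0) (x l) < dist (x 0) z) :
    IsExpandingChain (Function.update x (l + 1) z) (l + 1) := by
  intro i hi
  simp only [Function.update_of_ne (Nat.succ_ne_zero l).symm,
    Function.update_of_ne (Nat.ne_of_lt hi)]
  rcases Nat.lt_succ_iff_lt_or_eq.mp hi with hi | rfl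
  · rw [Function.update_of_ne (by omega)]
    exact h i hi
  · rwa [Function.update_self]

end IsExpandingChain

theorem Finset.exists_diam_le_two_mul_dist {X : Finset α} {a : α} (ha : a ∈ X) :
    ∃ z ∈ X, diam (X : Set α) ≤ 2 * dist a z := by
  obtain ⟨z, hz, hmax⟩ := X.exists_max_image (dist a) ⟨a, ha⟩
  refine ⟨z, hz, diam_le_of_forall_dist_le (by positivity) fun y hy y' hy' => ?_⟩
  linarith [dist_triangle_left y y' a, hmax y hy, hmax y' hy']

end PseudoMetric

theorem Finset.exists_subset_lt_card_subset_of_mul_lt_card {α ι : Type*} {X : Finset α}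
    {T : Finset ι} {U : ι → Set α} {N : ℕ} (hcover : (X : Set α) ⊆ ⋃ t ∈ T, U t)
    (hcard : T.card * N < X.card) : ∃ t ∈ T, ∃ S ⊆ X, N < S.card ∧ (S : Set α) ⊆ U t := by
  classical
  have hmem : ∀ x ∈ X, ∃ t ∈ T, x ∈ U t := fun x hx => by simpa using hcover hx
  obtain ⟨x₀, hx₀⟩ := Finset.card_pos.mp (pos_of_gt hcard)
  have : Nonempty ι := ⟨(hmem x₀ hx₀).choose⟩
  choose! f hfT hfU using hmem
  obtain ⟨t, ht, hN⟩ := Finset.exists_lt_card_fiber_of_mul_lt_card_of_maps_to hfT hcard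
  refine ⟨t, ht, _, Finset.filter_subset _ _, hN, fun x hx => ?_⟩
  obtain ⟨hxX, rfl⟩ := Finset.mem_filter.mp hx
  exact hfU x hxX

section Normed

variable (E : Type*) [NormedAddCommGroup E] [NormedSpace ℝ E] [ProperSpace E]

theorem exists_card_le_closedBall_subset_iUnion_ball {ε : ℝ} (hε : 0 < ε) :
    ∃ K : ℕ, ∀ (c : E) {r : ℝ}, 0 < r →
      ∃ T : Finset E, T.card ≤ K ∧ closedBall c r ⊆ ⋃ t ∈ T, ball t (ε * r) := by
  classical
  obtain ⟨T₀, -, hT₀⟩ :=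
    (isCompact_closedBall (0 : E) 1).elim_nhds_subcover _ fun y _ => ball_mem_nhds y hε
  refine ⟨T₀.card, fun c r hr => ⟨T₀.image (c + r • ·), Finset.card_image_le, fun y hy => ?_⟩⟩
  have hunit : r⁻¹ • (y - c) ∈ closedBall (0 : E) 1 := by
    rw [mem_closedBall_zero_iff, norm_smul, Real.norm_of_nonneg (inv_nonneg.2 hr.le),
      ← dist_eq_norm, inv_mul_le_one₀ hr]
    exact hy
  obtain ⟨t, ht, hyt⟩ := mem_iUnion₂.mp (hT₀ hunit)
  refine mem_iUnion₂.mpr ⟨c + r • t, Finset.mem_image_of_mem _ ht, ?_⟩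
  have hrescale : y - (c + r • t) = r • (r⁻¹ • (y - c) - t) := by
    rw [smul_sub, smul_inv_smul₀ hr.ne', sub_sub]
  rw [mem_ball, dist_eq_norm, hrescale, norm_smul, Real.norm_of_nonneg hr.le, ← dist_eq_norm,
    mul_comm ε]
  exact mul_lt_mul_of_pos_left (mem_ball.mp hyt) hr

theorem exists_large_subset_dist_lt_diam_div_four :
    ∃ K : ℕ, ∀ (N : ℕ) (X : Finset E), 0 < diam (X : Set E) → K * N < X.card →
      ∃ S ⊆ X, N < S.card ∧ ∀ y ∈ S, ∀ y' ∈ S, dist y y' < diam (X : Set E) / 4 := by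
  obtain ⟨K, hK⟩ := exists_card_le_closedBall_subset_iUnion_ball E (ε := 1 / 8) (by norm_num)
  refine ⟨K, fun N X hD hcard => ?_⟩
  set D := diam (X : Set E)
  obtain ⟨a, ha⟩ : X.Nonempty := Finset.card_pos.mp (by omega)
  have hXball : (X : Set E) ⊆ closedBall a D := fun y hy =>
    dist_le_diam_of_mem X.finite_toSet.isBounded hy ha
  obtain ⟨T, hTK, hT⟩ := hK a hD
  obtain ⟨t, -, S, hSX, hN, hSt⟩ := Finset.exists_subset_lt_card_subset_of_mul_lt_card
    (hXball.trans hT) ((Nat.mul_le_mul_right N hTK).trans_lt hcard)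
  refine ⟨S, hSX, hN, fun y hy y' hy' => ?_⟩
  linarith [dist_triangle_right y y' t, mem_ball.mp (hSt hy), mem_ball.mp (hSt hy')]

theorem exists_isExpandingChain (l : ℕ) :
    ∃ N : ℕ, ∀ X : Finset E, N ≤ X.card →
      ∃ x : ℕ → E, (∀ i ≤ l, x i ∈ X) ∧ IsExpandingChain x l := by
  induction l with
  | zero =>
    refine ⟨1, fun X hX => ?_⟩
    obtain ⟨a, ha⟩ := Finset.card_pos.mp hX
    exact ⟨fun _ => a, fun _ _ => ha, fun i hi => absurd hi (Nat.not_lt_zero i)⟩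
  | succ m ih =>
    obtain ⟨N, hN⟩ := ih
    obtain ⟨K, hK⟩ := exists_large_subset_dist_lt_diam_div_four E
    refine ⟨K * N + 2, fun X hX => ?_⟩
    obtain ⟨a, ha, b, hb, hab⟩ := Finset.one_lt_card.mp (show 1 < X.card by omega)
    have hD : 0 < diam (X : Set E) :=
      (dist_pos.mpr hab).trans_le (dist_le_diam_of_mem X.finite_toSet.isBounded ha hb)
    obtain ⟨S, hSX, hS, hSdist⟩ := hK N X hD (by omega)
    obtain ⟨x, hxS, hx⟩ := hN S hS.le
    obtain ⟨z, hzX, hz⟩ := Finset.exists_diam_le_two_mul_dist (hSX (hxS 0 m.zero_le))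
    have hfar : 2 * dist (x 0) (x m) < dist (x 0) z := by
      linarith [hSdist _ (hxS 0 m.zero_le) _ (hxS m le_rfl)]
    refine ⟨Function.update x (m + 1) z, fun i hi => ?_, hx.update_succ hfar⟩
    rcases Nat.le_succ_iff.mp hi with hi | rfl
    · rw [Function.update_of_ne (by omega)]
      exact hSX (hxS i hi)
    · rwa [Function.update_self]

end Normed

/-- Point-selection lemma: among sufficiently many distinct points in ℝⁿ, one can
choose `x₀,…,x_l` with `|x₀ − x_i| > 2 |x₀ − x_{i−1}|` for `2 ≤ i ≤ l`. -/
theorem point_selection (l n : ℕ) :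
    ∃ N : ℕ, ∀ X : Finset (EuclideanSpace ℝ (Fin n)), N ≤ X.card →
      ∃ x : ℕ → EuclideanSpace ℝ (Fin n),
        (∀ i ≤ l, x i ∈ X) ∧
        Set.InjOn x {i | i ≤ l} ∧
        ∀ i : ℕ, 2 ≤ i → i ≤ l →
          dist (x 0) (x i) > 2 * dist (x 0) (x (i - 1)) := by
  obtain ⟨N, hN⟩ := exists_isExpandingChain (EuclideanSpace ℝ (Fin n)) l
  refine ⟨N, fun X hX => ?_⟩
  obtain ⟨x, hxX, hx⟩ := hN X hX
  refine ⟨x, hxX, hx.injOn, fun i hi2 hil => ?_⟩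
  obtain ⟨j, rfl⟩ := Nat.exists_eq_add_of_le' (show 1 ≤ i by omega)
  exact hx j (by omega)
end
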